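/- Let q,t ≥ 2 be integers with q even and q ≤ t, and let 0 < ε < min{q/(2t), 1/2}. Let δ ∈ {0,1} with δ ≡ t (mod 2) and set t₂ = t−δ (the largest even integer ≤ t). Then: if t = q, the triple (q,t,ε) is a good triple if and only if 0 < ε < 1/(2(q−1)); and if q < t < 2q, the triple (q,t,ε) is a good triple if and only if 0 < ε < min{ q/(2t), q/t₂ − 1/2, 1/(2(q+1)) }. Moreover, if t ≥ q, q odd is impossible and t < 2q is necessary: if q is odd with t ≥ q, or if t ≥ 2q, then (q,t,ε) is not a good triple for any admissible ε. -/

import Mathlib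

/-!
Clearing denominators, level `n` of the condition asks for an integer `s` with
`2εn < 2qs - (q-1)n < 2q - 2εn`. The middle quantity runs through a residue class modulo `2q`
and the window has length less than `2q`, so only the representative `r ∈ [0, 2q]` of
`-(q-1)n` can fit, and level `n` is solvable iff `2εn < r < 2q - 2εn`. Here `r = n` for even
`n ≤ 2q`, `r = q + n` for odd `n ≤ q` and `r = n - q` for odd `q ≤ n ≤ 3q`. The level `n = 2q`,
and for odd `q` the level `n = q`, have `r ∈ {0, 2q}` and are never solvable; otherwise the
binding levels are `n = q - 1` when `t = q`, and `n = t₂`, `n = q + 1` when `q < t < 2q`.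
-/

/-- `(q,t,ε)` is a good triple. -/
def GoodTriple (q t : ℕ) (ε : ℝ) : Prop :=
  ∀ t' : ℕ, 2 ≤ t' → t' ≤ t →
    ∃ s : ℕ, 1 ≤ s ∧ s ≤ t' ∧
      (t' : ℝ) / 2 - (1 - 2 * ε) * (t' : ℝ) / (2 * (q : ℝ)) < (s : ℝ) ∧
      (s : ℝ) < (t' : ℝ) / 2 + 1 - (1 + 2 * ε) * (t' : ℝ) / (2 * (q : ℝ))

lemma bounds_iff_cleared {q : ℝ} (hq : 0 < q) (n ε s : ℝ) :
    (n / 2 - (1 - 2 * ε) * n / (2 * q) < s ∧ s < n / 2 + 1 - (1 + 2 * ε) * n / (2 * q)) ↔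
      (2 * ε * n < 2 * q * s - (q - 1) * n ∧ 2 * q * s - (q - 1) * n < 2 * q - 2 * ε * n) := by
  have hq' : 0 < 2 * q := by positivity
  rw [show n / 2 - (1 - 2 * ε) * n / (2 * q) = (n * q - (1 - 2 * ε) * n) / (2 * q) by
      field_simp,
    show n / 2 + 1 - (1 + 2 * ε) * n / (2 * q) = (n * q + 2 * q - (1 + 2 * ε) * n) / (2 * q) by
      field_simp,
    div_lt_iff₀ hq', lt_div_iff₀ hq']
  constructor <;> rintro ⟨h₁, h₂⟩ <;> constructor <;> linarith

section

variable {q n t : ℕ} {ε : ℝ}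

/-- Level `n` of `GoodTriple`, with denominators cleared and `s` ranging over `ℤ`: for `n ≥ 2`
the range `1 ≤ s ≤ n` is then automatic. -/
def HasWitness (q : ℕ) (ε : ℝ) (n : ℕ) : Prop :=
  ∃ s : ℤ, 2 * ε * n < 2 * q * s - (q - 1) * n ∧ 2 * q * s - (q - 1) * n < 2 * q - 2 * ε * n

lemma goodTriple_iff_forall_hasWitness (hq : 0 < q) (hε : 0 ≤ ε) :
    GoodTriple q t ε ↔ ∀ n, 2 ≤ n → n ≤ t → HasWitness q ε n := by
  refine forall₃_congr fun n hn _ => ⟨?_, ?_⟩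
  · rintro ⟨s, -, -, hs⟩
    exact ⟨s, by simpa using (bounds_iff_cleared (by exact_mod_cast hq) _ _ _).1 hs⟩
  · rintro ⟨s, hs⟩
    have hq1 : (1 : ℝ) ≤ q := by exact_mod_cast hq
    have hn2 : (2 : ℝ) ≤ n := by exact_mod_cast hn
    have hs0 : (0 : ℝ) < s := by nlinarith
    have hsn : (s : ℝ) < n := by nlinarith
    lift s to ℕ using by exact_mod_cast hs0.le
    push_cast at hs0 hsn hs
    exact ⟨s, by exact_mod_cast hs0, by exact_mod_cast hsn.le,
      (bounds_iff_cleared (by exact_mod_cast hq) _ _ _).2 hs⟩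

lemma hasWitness_iff_of_residue (hq : 0 < q) (hε : 0 ≤ ε) {s₀ : ℤ} {r : ℝ}
    (hr : 2 * q * s₀ - (q - 1) * n = r) (hr₀ : 0 ≤ r) (hr₁ : r ≤ 2 * q) :
    HasWitness q ε n ↔ 2 * ε * n < r ∧ r < 2 * q - 2 * ε * n := by
  refine ⟨?_, fun h => ⟨s₀, hr ▸ h⟩⟩
  rintro ⟨s, hs⟩
  have hq' : (0 : ℝ) < q := by exact_mod_cast hq
  have hεn : 0 ≤ 2 * ε * n := by positivity
  have hlt : (s : ℝ) < s₀ + 1 := by nlinarith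
  have hgt : (s₀ : ℝ) < s + 1 := by nlinarith
  obtain rfl : s = s₀ := by
    have h₁ : s < s₀ + 1 := by exact_mod_cast hlt
    have h₂ : s₀ < s + 1 := by exact_mod_cast hgt
    omega
  exact hr ▸ hs

lemma hasWitness_iff_of_even (hq : 0 < q) (hε : 0 ≤ ε) (hn : Even n) (hnq : n ≤ 2 * q) :
    HasWitness q ε n ↔ 2 * ε * n < n ∧ (n : ℝ) < 2 * q - 2 * ε * n := by
  obtain ⟨k, rfl⟩ := hn
  refine hasWitness_iff_of_residue (s₀ := k) hq hε ?_ (by positivity) (by exact_mod_cast hnq)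
  push_cast; ring

lemma hasWitness_iff_of_odd_of_le (hq : 0 < q) (hε : 0 ≤ ε) (hn : Odd n) (hnq : n ≤ q) :
    HasWitness q ε n ↔ 2 * ε * n < q + n ∧ (q + n : ℝ) < 2 * q - 2 * ε * n := by
  obtain ⟨k, rfl⟩ := hn
  refine hasWitness_iff_of_residue (s₀ := k + 1) hq hε ?_ (by positivity) ?_
  · push_cast; ring
  · have : ((2 * k + 1 : ℕ) : ℝ) ≤ q := by exact_mod_cast hnq
    linarith

lemma hasWitness_iff_of_odd_of_ge (hq : 0 < q) (hε : 0 ≤ ε) (hn : Odd n) (hqn : q ≤ n)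
    (hn3 : n ≤ 3 * q) :
    HasWitness q ε n ↔ 2 * ε * n < n - q ∧ (n - q : ℝ) < 2 * q - 2 * ε * n := by
  obtain ⟨k, rfl⟩ := hn
  have hqn' : (q : ℝ) ≤ (2 * k + 1 : ℕ) := by exact_mod_cast hqn
  have hn3' : ((2 * k + 1 : ℕ) : ℝ) ≤ 3 * q := by exact_mod_cast hn3
  refine hasWitness_iff_of_residue (s₀ := k) hq hε ?_ (by linarith) (by linarith)
  push_cast; ring

lemma ne_of_odd_of_even {m : ℕ} (hn : Odd n) (hm : Even m) : n ≠ m :=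
  fun h => Nat.not_even_iff_odd.2 hn (h ▸ hm)

lemma not_goodTriple_of_odd (hq : Odd q) (hq2 : 2 ≤ q) (hqt : q ≤ t) (hε : 0 ≤ ε) :
    ¬ GoodTriple q t ε := by
  rw [goodTriple_iff_forall_hasWitness (by omega) hε]
  intro h
  have hlevel := (hasWitness_iff_of_odd_of_ge (by omega) hε hq le_rfl (by omega)).1 (h q hq2 hqt)
  have : 0 ≤ 2 * ε * q := by positivity
  linarith [hlevel.1]

lemma not_goodTriple_of_two_mul_le (hq : 1 ≤ q) (hqt : 2 * q ≤ t) (hε : 0 ≤ ε) :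
    ¬ GoodTriple q t ε := by
  rw [goodTriple_iff_forall_hasWitness (by omega) hε]
  intro h
  have hlevel := (hasWitness_iff_of_even (by omega) hε (even_two_mul q) le_rfl).1
    (h (2 * q) (by omega) hqt)
  have : 0 ≤ 2 * ε * (2 * q : ℕ) := by positivity
  push_cast at hlevel this
  linarith [hlevel.2]

lemma goodTriple_self_iff (hq : 2 ≤ q) (hqe : Even q) (hε₀ : 0 < ε) (hε : ε < 1 / 2) :
    GoodTriple q q ε ↔ ε < 1 / (2 * (q - 1)) := by
  have hq' : (2 : ℝ) ≤ q := by exact_mod_cast hq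
  rw [goodTriple_iff_forall_hasWitness (by omega) hε₀.le, lt_div_iff₀ (by linarith)]
  constructor
  · intro h
    rcases hq.eq_or_lt with rfl | hq
    · norm_num; linarith
    have hodd : Odd (q - 1) := Nat.Even.sub_odd (by omega) hqe odd_one
    have hlevel := (hasWitness_iff_of_odd_of_le (by omega) hε₀.le hodd (by omega)).1
      (h (q - 1) (by omega) (by omega))
    rw [Nat.cast_sub (by omega)] at hlevel
    push_cast at hlevel
    linarith [hlevel.2]
  · intro h n hn hnq
    have hnq' : (n : ℝ) ≤ q := by exact_mod_cast hnq
    have hn' : (2 : ℝ) ≤ n := by exact_mod_cast hn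
    rcases Nat.even_or_odd n with hne | hno
    · rw [hasWitness_iff_of_even (by omega) hε₀.le hne (by omega)]
      constructor <;> nlinarith
    · have hnq₁ : (n : ℝ) ≤ q - 1 := by
        have : n + 1 ≤ q := by have := ne_of_odd_of_even hno hqe; omega
        linarith [(by exact_mod_cast this : (n : ℝ) + 1 ≤ q)]
      rw [hasWitness_iff_of_odd_of_le (by omega) hε₀.le hno hnq]
      constructor <;> nlinarith

lemma goodTriple_iff_of_lt_of_lt_two_mul {t₂ : ℕ} (hqe : Even q) (hqt : q < t) (htq : t < 2 * q)
    (ht₂ : Even t₂) (ht₂t : t₂ ≤ t) (htt₂ : t ≤ t₂ + 1) (hε₀ : 0 < ε) (hε : ε < 1 / 2) :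
    GoodTriple q t ε ↔ ε < q / t₂ - 1 / 2 ∧ ε < 1 / (2 * (q + 1)) := by
  have hq : 2 ≤ q := by obtain ⟨k, rfl⟩ := hqe; omega
  have hq' : (2 : ℝ) ≤ q := by exact_mod_cast hq
  have ht₂q : (t₂ : ℝ) < 2 * q := by exact_mod_cast (by omega : t₂ < 2 * q)
  have ht₂' : (2 : ℝ) ≤ t₂ := by exact_mod_cast (by omega : 2 ≤ t₂)
  rw [goodTriple_iff_forall_hasWitness (by omega) hε₀.le, lt_sub_iff_add_lt,
    lt_div_iff₀ (by linarith), lt_div_iff₀ (by linarith)]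
  constructor
  · intro h
    have heven := (hasWitness_iff_of_even (by omega) hε₀.le ht₂ (by omega)).1
      (h t₂ (by omega) ht₂t)
    have hodd := (hasWitness_iff_of_odd_of_ge (by omega) hε₀.le (hqe.add_one) (by omega)
      (by omega)).1 (h (q + 1) (by omega) (by omega))
    push_cast at hodd
    constructor <;> linarith
  · rintro ⟨hevenε, hoddε⟩ n hn hnt
    have hn' : (2 : ℝ) ≤ n := by exact_mod_cast hn
    rcases Nat.even_or_odd n with hne | hno
    · have hnt₂ : (n : ℝ) ≤ t₂ := by
        exact_mod_cast (by obtain ⟨a, rfl⟩ := hne; obtain ⟨b, rfl⟩ := ht₂; omega : n ≤ t₂)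
      rw [hasWitness_iff_of_even (by omega) hε₀.le hne (by omega)]
      constructor <;> nlinarith
    rcases Nat.lt_or_gt_of_ne (ne_of_odd_of_even hno hqe) with hnq | hqn
    · have hnq' : (n : ℝ) + 1 ≤ q := by exact_mod_cast hnq
      rw [hasWitness_iff_of_odd_of_le (by omega) hε₀.le hno hnq.le]
      constructor <;> nlinarith
    · have hqn' : (q : ℝ) + 1 ≤ n := by exact_mod_cast hqn
      have hnq' : (n : ℝ) + 1 ≤ 2 * q := by exact_mod_cast (by omega : n + 1 ≤ 2 * q)
      rw [hasWitness_iff_of_odd_of_ge (by omega) hε₀.le hno hqn.le (by omega)]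
      constructor <;> nlinarith

end

theorem stmt8_general (q t : ℕ) (hq : 2 ≤ q) (hqt : q ≤ t)
    (ε : ℝ) (hε0 : 0 < ε) (hε : ε < min ((q : ℝ) / (2 * (t : ℝ))) (1 / 2))
    (δ : ℕ) (hδ01 : δ = 0 ∨ δ = 1) (hδ : δ % 2 = t % 2) :
    (q % 2 = 0 → t = q →
      (GoodTriple q t ε ↔ (0 < ε ∧ ε < 1 / (2 * ((q : ℝ) - 1))))) ∧
    (q % 2 = 0 → q < t → t < 2 * q →
      (GoodTriple q t ε ↔ (0 < ε ∧ ε < min ((q : ℝ) / (2 * (t : ℝ)))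
        (min ((q : ℝ) / ((t : ℝ) - (δ : ℝ)) - 1 / 2) (1 / (2 * ((q : ℝ) + 1))))))) ∧
    (q % 2 = 1 → ¬ GoodTriple q t ε) ∧
    (2 * q ≤ t → ¬ GoodTriple q t ε) := by
  obtain ⟨hεt, hε2⟩ := lt_min_iff.1 hε
  refine ⟨fun hqe htq => ?_, fun hqe hqt' htq => ?_, fun hqo => ?_, fun h2q => ?_⟩
  · subst htq
    rw [goodTriple_self_iff hq (Nat.even_iff.2 hqe) hε0 hε2]
    exact (and_iff_right hε0).symm
  · have ht₂ : Even (t - δ) := Nat.even_iff.2 (by omega)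
    rw [goodTriple_iff_of_lt_of_lt_two_mul (Nat.even_iff.2 hqe) hqt' htq ht₂ (by omega) (by omega)
      hε0 hε2, Nat.cast_sub (by omega), lt_min_iff, lt_min_iff]
    tauto
  · exact not_goodTriple_of_odd (Nat.odd_iff.2 hqo) hq hqt hε0.le
  · exact not_goodTriple_of_two_mul_le (by omega) h2q hε0.le

theorem stmt8 (q t : ℕ) (hq : 2 ≤ q) (ht : 2 ≤ t) (hqt : q ≤ t)
    (ε : ℝ) (hε0 : 0 < ε) (hε : ε < min ((q : ℝ) / (2 * (t : ℝ))) (1 / 2))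
    (δ : ℕ) (hδ01 : δ = 0 ∨ δ = 1) (hδ : δ % 2 = t % 2) :
    (q % 2 = 0 → t = q →
      (GoodTriple q t ε ↔ (0 < ε ∧ ε < 1 / (2 * ((q : ℝ) - 1))))) ∧
    (q % 2 = 0 → q < t → t < 2 * q →
      (GoodTriple q t ε ↔ (0 < ε ∧ ε < min ((q : ℝ) / (2 * (t : ℝ)))
        (min ((q : ℝ) / ((t : ℝ) - (δ : ℝ)) - 1 / 2) (1 / (2 * ((q : ℝ) + 1))))))) ∧
    (q % 2 = 1 → ¬ GoodTriple q t ε) ∧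
    (2 * q ≤ t → ¬ GoodTriple q t ε) :=
  stmt8_general q t hq hqt ε hε0 hε δ hδ01 hδ
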